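/- arXiv:1210.4572 — 2 statements merged into one kernel-verified Lean document; each statement's English description precedes it below -/
import Mathlib

section
/- Let k be bounded measurable, X adapted continuous, g(X_T) ∈ L_p(ℙ) for p ∈ [1, ∞], K := exp(∫_0^T k(r,X_r) dr). Then for all t ∈ [0,T]: ‖K g(X_T) − E(K g(X_T)|ℱ_t)‖_{L_p(ℙ)} ≤ 2 e^{‖k‖_∞ T} [‖k‖_∞ (T−t) ‖g(X_T)‖_{L_p(ℙ)} + ‖g(X_T) − E(g(X_T)|ℱ_t)‖_{L_p(ℙ)}]. -/
open MeasureTheory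
open scoped ENNReal

/-! Let `A := exp (∫₀ᵗ k(r, X_r) dr)`, which is `ℱ_t`-measurable, and `U := exp (∫₀ᵀ k(r, X_r) dr)`.
Then `|A| ≤ e^{‖k‖_∞ T}` and, exp being `e^{‖k‖_∞ T}`-Lipschitz below `‖k‖_∞ T`,
`|U - A| ≤ e^{‖k‖_∞ T} ‖k‖_∞ (T - t)`. Since `A · E(g(X_T) | ℱ_t)` is `ℱ_t`-measurable, the
oscillation of `U g(X_T)` is at most twice its `L_p` distance to it, and
`U g(X_T) - A E(g(X_T) | ℱ_t) = (U - A) g(X_T) + A (g(X_T) - E(g(X_T) | ℱ_t))`. -/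

namespace Real

theorem abs_exp_sub_exp_le_exp_mul {x y a : ℝ} (hx : x ≤ a) (hy : y ≤ a) :
    |exp x - exp y| ≤ exp a * |x - y| := by
  wlog hyx : y ≤ x generalizing x y
  · rw [abs_sub_comm, abs_sub_comm x]
    exact this hy hx (le_of_not_ge hyx)
  have hexp : exp x * (y - x + 1) ≤ exp y := by
    calc exp x * (y - x + 1) ≤ exp x * exp (y - x) :=
          mul_le_mul_of_nonneg_left (add_one_le_exp _) (exp_pos x).le
      _ = exp y := by rw [← exp_add]; ring_nf
  rw [abs_of_nonneg (sub_nonneg.2 (exp_le_exp.2 hyx)), abs_of_nonneg (sub_nonneg.2 hyx)]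
  nlinarith [exp_le_exp.2 hx]

end Real

section BoundedIntegrand

open Real

variable {f : ℝ → ℝ} {C : ℝ}

theorem abs_intervalIntegral_le_mul_sub (hf : ∀ r, |f r| ≤ C) {a b : ℝ} (hab : a ≤ b) :
    |∫ r in a..b, f r| ≤ C * (b - a) := by
  simpa only [Real.norm_eq_abs, abs_of_nonneg (sub_nonneg.2 hab)] using
    intervalIntegral.norm_integral_le_of_norm_le_const (f := f) (a := a) (b := b) fun r _ => hf r

theorem intervalIntegral_le_mul_sub (hf : ∀ r, |f r| ≤ C) {a b : ℝ} (hab : a ≤ b) :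
    ∫ r in a..b, f r ≤ C * (b - a) :=
  (le_abs_self _).trans (abs_intervalIntegral_le_mul_sub hf hab)

theorem exp_intervalIntegral_le (hf : ∀ r, |f r| ≤ C) {a s T : ℝ} (has : a ≤ s) (hsT : s ≤ T) :
    exp (∫ r in a..s, f r) ≤ exp (C * (T - a)) := by
  have hC : 0 ≤ C := (abs_nonneg _).trans (hf 0)
  exact exp_le_exp.2 ((intervalIntegral_le_mul_sub hf has).trans (by nlinarith))

theorem abs_exp_intervalIntegral_sub_exp_intervalIntegral_le (hfm : Measurable f)
    (hf : ∀ r, |f r| ≤ C) {a s T : ℝ} (has : a ≤ s) (hsT : s ≤ T) :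
    |exp (∫ r in a..T, f r) - exp (∫ r in a..s, f r)| ≤ exp (C * (T - a)) * (C * (T - s)) := by
  have hC : 0 ≤ C := (abs_nonneg _).trans (hf 0)
  have hint : ∀ b c, IntervalIntegrable f volume b c := fun b c =>
    intervalIntegrable_const.mono_fun' hfm.aestronglyMeasurable (ae_of_all _ hf)
  refine (abs_exp_sub_exp_le_exp_mul (intervalIntegral_le_mul_sub hf (has.trans hsT))
    ((intervalIntegral_le_mul_sub hf has).trans (by nlinarith))).trans ?_
  rw [intervalIntegral.integral_interval_sub_left (hint a T) (hint a s)]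
  exact mul_le_mul_of_nonneg_left (abs_intervalIntegral_le_mul_sub hf hsT) (exp_pos _).le

end BoundedIntegrand

section IntegralAlongPaths

variable {Ω β : Type*} [TopologicalSpace β] [TopologicalSpace.PseudoMetrizableSpace β]
  [MeasurableSpace β] [BorelSpace β] {k : ℝ → β → ℝ}

theorem stronglyMeasurable_intervalIntegral_comp_of_continuous {m : MeasurableSpace Ω}
    (hk : Measurable (Function.uncurry k)) {Y : ℝ → Ω → β} (hY : ∀ r, StronglyMeasurable[m] (Y r))
    (hYc : ∀ ω, Continuous fun r => Y r ω) (a b : ℝ) :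
    StronglyMeasurable[m] fun ω => ∫ r in a..b, k r (Y r ω) := by
  have hkY : Measurable fun q : Ω × ℝ => k q.2 (Y q.2 q.1) :=
    hk.comp (measurable_snd.prodMk
      ((stronglyMeasurable_uncurry_of_continuous_of_stronglyMeasurable hYc hY).measurable.comp
        measurable_swap))
  have hIoc : ∀ c e : ℝ, StronglyMeasurable[m] fun ω => ∫ r in Set.Ioc c e, k r (Y r ω) :=
    fun c e => hkY.stronglyMeasurable.integral_prod_right'
  simp only [intervalIntegral]
  exact (hIoc a b).sub (hIoc b a)

theorem MeasureTheory.StronglyAdapted.stronglyMeasurable_intervalIntegral_comp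
    {mΩ : MeasurableSpace Ω} {F : Filtration ℝ mΩ} {X : ℝ → Ω → β} (hX : StronglyAdapted F X)
    (hXc : ∀ ω, Continuous fun r => X r ω) (hk : Measurable (Function.uncurry k)) {a s : ℝ}
    (has : a ≤ s) : StronglyMeasurable[F s] fun ω => ∫ r in a..s, k r (X r ω) := by
  -- On `[a, s]` the path agrees with the stopped path `r ↦ X (min r s)`, which is `F s`-adapted.
  have hstopped := stronglyMeasurable_intervalIntegral_comp_of_continuous hk
    (fun r => (hX (min r s)).mono (F.mono (min_le_right r s)))
    (fun ω => (hXc ω).comp (continuous_id.min continuous_const)) a s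
  convert hstopped using 2 with ω
  refine intervalIntegral.integral_congr fun r hr => ?_
  rw [Set.uIcc_of_le has] at hr
  simp only [min_eq_left hr.2]

end IntegralAlongPaths

section ConditionalOscillation

variable {Ω : Type*} {m mΩ : MeasurableSpace Ω} {μ : Measure Ω} {p : ℝ≥0∞}

theorem eLpNorm_sub_condExp_le_two_mul {E : Type*} [NormedAddCommGroup E] [NormedSpace ℝ E]
    [CompleteSpace E] (hm : m ≤ mΩ) [SigmaFinite (μ.trim hm)] {f g : Ω → E}
    (hf : Integrable f μ) (hg : Integrable g μ) (hgm : StronglyMeasurable[m] g) (hp : 1 ≤ p) :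
    eLpNorm (f - μ[f|m]) p μ ≤ 2 * eLpNorm (f - g) p μ := by
  have hosc : f - μ[f|m] =ᵐ[μ] (f - g) - μ[f - g|m] := by
    filter_upwards [condExp_sub hf hg m] with ω hω
    rw [Pi.sub_apply, Pi.sub_apply, hω, condExp_of_stronglyMeasurable hm hgm hg]
    simp only [Pi.sub_apply]
    abel
  calc eLpNorm (f - μ[f|m]) p μ = eLpNorm ((f - g) - μ[f - g|m]) p μ := eLpNorm_congr_ae hosc
    _ ≤ eLpNorm (f - g) p μ + eLpNorm (μ[f - g|m]) p μ :=
        eLpNorm_sub_le (hf.sub hg).aestronglyMeasurable integrable_condExp.aestronglyMeasurable hp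
    _ ≤ eLpNorm (f - g) p μ + eLpNorm (f - g) p μ := by
        gcongr; exact eLpNorm_condExp_le_eLpNorm _ hp
    _ = 2 * eLpNorm (f - g) p μ := (two_mul _).symm

theorem eLpNorm_mul_sub_mul_le {U A V W : Ω → ℝ} {a b : ℝ} (hU : AEStronglyMeasurable U μ)
    (hA : AEStronglyMeasurable A μ) (hV : AEStronglyMeasurable V μ)
    (hW : AEStronglyMeasurable W μ) (hUA : ∀ ω, |U ω - A ω| ≤ a) (hAb : ∀ ω, |A ω| ≤ b)
    (hp : 1 ≤ p) :
    eLpNorm (U * V - A * W) p μ ≤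
      ENNReal.ofReal a * eLpNorm V p μ + ENNReal.ofReal b * eLpNorm (V - W) p μ := by
  have hsplit : U * V - A * W = (U - A) * V + A * (V - W) := by ring
  rw [hsplit]
  refine (eLpNorm_add_le ((hU.sub hA).mul hV) (hA.mul (hV.sub hW)) hp).trans (add_le_add ?_ ?_)
  all_goals
    refine eLpNorm_le_mul_eLpNorm_of_ae_le_mul (ae_of_all _ fun ω => ?_) p
    simp only [Pi.mul_apply, Pi.sub_apply, Real.norm_eq_abs, abs_mul]
    gcongr
  exacts [hUA ω, hAb ω]

theorem eLpNorm_mul_sub_condExp_le (hm : m ≤ mΩ) [SigmaFinite (μ.trim hm)] {U A V : Ω → ℝ}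
    {a b : ℝ} (hU : AEStronglyMeasurable U μ) (hA : StronglyMeasurable[m] A)
    (hV : Integrable V μ) (hUA : ∀ ω, |U ω - A ω| ≤ a) (hAb : ∀ ω, |A ω| ≤ b) (hp : 1 ≤ p) :
    eLpNorm (U * V - μ[U * V|m]) p μ ≤
      2 * (ENNReal.ofReal a * eLpNorm V p μ + ENNReal.ofReal b * eLpNorm (V - μ[V|m]) p μ) := by
  have hUbdd : ∀ ω, ‖U ω‖ ≤ a + b := fun ω => by
    rw [Real.norm_eq_abs]
    linarith [abs_sub_abs_le_abs_sub (U ω) (A ω), hUA ω, hAb ω]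
  calc eLpNorm (U * V - μ[U * V|m]) p μ ≤ 2 * eLpNorm (U * V - A * μ[V|m]) p μ :=
        eLpNorm_sub_condExp_le_two_mul hm (hV.bdd_mul hU (ae_of_all _ hUbdd))
          (integrable_condExp.bdd_mul (hA.mono hm).aestronglyMeasurable (ae_of_all _ hAb))
          (hA.mul stronglyMeasurable_condExp) hp
    _ ≤ _ := by
        gcongr
        exact eLpNorm_mul_sub_mul_le hU (hA.mono hm).aestronglyMeasurable hV.aestronglyMeasurable
          integrable_condExp.aestronglyMeasurable hUA hAb hp

end ConditionalOscillation

theorem eLpNorm_exp_potential_mul_condexp_osc_bound_general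
    {Ω : Type*} {mΩ : MeasurableSpace Ω} (P : Measure Ω) [IsProbabilityMeasure P]
    (F : Filtration ℝ mΩ) (d : ℕ) (T : ℝ)
    (X : ℝ → Ω → (Fin d → ℝ)) (hXadapted : Adapted F X)
    (hXcont : ∀ ω, Continuous fun s => X s ω)
    (k : ℝ → (Fin d → ℝ) → ℝ) (hkmeas : Measurable (Function.uncurry k))
    (C : ℝ) (hkbound : ∀ s x, |k s x| ≤ C)
    (g : (Fin d → ℝ) → ℝ)
    (p : ℝ≥0∞) (hp : 1 ≤ p) (hgX : MemLp (fun ω => g (X T ω)) p P) :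
    ∀ t ∈ Set.Icc (0 : ℝ) T,
      eLpNorm
        (fun ω => Real.exp (∫ r in (0 : ℝ)..T, k r (X r ω)) * g (X T ω) -
          (P[fun ω' => Real.exp (∫ r in (0 : ℝ)..T, k r (X r ω')) * g (X T ω') | F t]) ω)
        p P ≤
      ENNReal.ofReal (2 * Real.exp (C * T)) *
        (ENNReal.ofReal (C * (T - t)) * eLpNorm (fun ω => g (X T ω)) p P +
          eLpNorm (fun ω => g (X T ω) - (P[fun ω' => g (X T ω') | F t]) ω) p P) := by
  rintro t ⟨ht0, htT⟩
  have hpotential : ∀ {s}, 0 ≤ s → StronglyMeasurable[F s]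
      fun ω => Real.exp (∫ r in (0 : ℝ)..s, k r (X r ω)) := fun hs =>
    Real.continuous_exp.comp_stronglyMeasurable
      (hXadapted.stronglyAdapted.stronglyMeasurable_intervalIntegral_comp hXcont hkmeas hs)
  have hincrement : ∀ ω, |Real.exp (∫ r in (0 : ℝ)..T, k r (X r ω)) -
      Real.exp (∫ r in (0 : ℝ)..t, k r (X r ω))| ≤ Real.exp (C * T) * (C * (T - t)) := fun ω => by
    simpa only [sub_zero] using abs_exp_intervalIntegral_sub_exp_intervalIntegral_le
      (f := fun r => k r (X r ω)) (hkmeas.comp (measurable_id.prodMk (hXcont ω).measurable))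
      (fun r => hkbound r _) ht0 htT
  have hbound : ∀ ω, |Real.exp (∫ r in (0 : ℝ)..t, k r (X r ω))| ≤ Real.exp (C * T) := fun ω => by
    rw [abs_of_pos (Real.exp_pos _)]
    simpa only [sub_zero] using exp_intervalIntegral_le (fun r => hkbound r (X r ω)) ht0 htT
  have hosc := eLpNorm_mul_sub_condExp_le (F.le t) (p := p)
    ((hpotential (ht0.trans htT)).mono (F.le T)).aestronglyMeasurable (hpotential ht0)
    (hgX.integrable hp) hincrement hbound hp
  simp only [Pi.sub_def] at hosc
  refine hosc.trans_eq ?_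
  rw [ENNReal.ofReal_mul (Real.exp_pos _).le, ENNReal.ofReal_mul zero_le_two, ENNReal.ofReal_ofNat]
  ring

/-- L_p bound for the conditional oscillation of K·g(X_T), where
K = exp(∫_0^T k(r,X_r) dr), in terms of the oscillation of g(X_T). -/
theorem eLpNorm_exp_potential_mul_condexp_osc_bound
    {Ω : Type*} {mΩ : MeasurableSpace Ω} (P : Measure Ω) [IsProbabilityMeasure P]
    (F : Filtration ℝ mΩ) (d : ℕ) (T : ℝ) (hT : 0 < T)
    (X : ℝ → Ω → (Fin d → ℝ)) (hXadapted : Adapted F X)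
    (hXcont : ∀ ω, Continuous fun s => X s ω)
    (k : ℝ → (Fin d → ℝ) → ℝ) (hkmeas : Measurable (Function.uncurry k))
    (C : ℝ) (hC : 0 ≤ C) (hkbound : ∀ s x, |k s x| ≤ C)
    (g : (Fin d → ℝ) → ℝ) (hg : Measurable g)
    (p : ℝ≥0∞) (hp : 1 ≤ p) (hgX : MemLp (fun ω => g (X T ω)) p P) :
    ∀ t ∈ Set.Icc (0 : ℝ) T,
      eLpNorm
        (fun ω => Real.exp (∫ r in (0 : ℝ)..T, k r (X r ω)) * g (X T ω) -
          (P[fun ω' => Real.exp (∫ r in (0 : ℝ)..T, k r (X r ω')) * g (X T ω') | F t]) ω)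
        p P ≤
      ENNReal.ofReal (2 * Real.exp (C * T)) *
        (ENNReal.ofReal (C * (T - t)) * eLpNorm (fun ω => g (X T ω)) p P +
          eLpNorm (fun ω => g (X T ω) - (P[fun ω' => g (X T ω') | F t]) ω) p P) :=
  eLpNorm_exp_potential_mul_condexp_osc_bound_general P F d T X hXadapted hXcont k hkmeas C hkbound
    g p hp hgX
end

section
/- Let 0 < θ < 1, 2 ≤ q ≤ ∞, and let d^0, d^1, d^2 : [0,T) → [0,∞) be measurable. Assume there exist A ≥ 0 and D ≥ 1 such that for k = 1,2 and all t ∈ [0,T): (1/D)(T−t)^{k/2} d^k(t) ≤ d^0(t) ≤ D (∫_t^T [d^1(s)]^2 ds)^{1/2}, and d^1(t) ≤ A + D (∫_0^t [d^2(u)]^2 du)^{1/2}. Then there is a constant c > 0 depending only on (D, θ, q, T) such that for all k, l ∈ {0,1,2}: (1/c)[A + Φ_q((T−t)^{(l−θ)/2} d^l(t))] ≤ A + Φ_q((T−t)^{(k−θ)/2} d^k(t)) ≤ c[A + Φ_q((T−t)^{(l−θ)/2} d^l(t))], where both sides may be +∞ simultaneously. -/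
open MeasureTheory
open scoped ENNReal

/-- `Φ_q(h) = ‖h‖_{L_q([0,T), dt/(T-t))}`. -/
noncomputable def Phi (T : ℝ) (q : ℝ≥0∞) (h : ℝ → ℝ) : ℝ≥0∞ :=
  eLpNorm h q
    ((MeasureTheory.volume.restrict (Set.Ico (0 : ℝ) T)).withDensity
      fun t => ENNReal.ofReal (1 / (T - t)))

/-!
Write `gₖ(t) = (T-t)^((k-θ)/2) dᵏ(t)`, `Ψₖ = Φ_q(gₖ)`, and `ν = dt/(T-t)` on `[0,T)`. The lower
bounds give `Ψ₁, Ψ₂ ≤ D Ψ₀` pointwise. The other two hypotheses are Hardy-type bounds: with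
`K_a(t,s) = ((T-s)/(T-t))^a` for `t < s` (and `0` otherwise),
  `g₀(t) ≤ D (∫ K_θ(t,s) g₁(s)² dν(s))^(1/2)`,
  `g₁(t) ≤ A (T-t)^((1-θ)/2) + D (∫ K_{1-θ}(u,t) g₂(u)² dν(u))^(1/2)`.
Both marginals of `K_a` with respect to `ν` are at most `1/a`, so by Schur's test these kernel
operators are bounded on `L^(q/2)(ν)`, where `q/2 ≥ 1`. As `(T-t)^((1-θ)/2)` lies in `L^q(ν)`,
this gives `Ψ₀ ≲ Ψ₁` and `Ψ₁ ≲ A + Ψ₂`, and the four inequalities chain together.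
-/

open Set Function

section Schur

variable {α : Type*} [MeasurableSpace α]

theorem lintegral_rpow_le_measure_univ_rpow_mul (ρ : Measure α) {g : α → ℝ≥0∞}
    (hg : AEMeasurable g ρ) {p : ℝ} (hp : 1 ≤ p) :
    (∫⁻ x, g x ∂ρ) ^ p ≤ ρ univ ^ (p - 1) * ∫⁻ x, g x ^ p ∂ρ := by
  have hp0 : 0 < p := by linarith
  have h := eLpNorm_le_eLpNorm_mul_rpow_measure_univ (μ := ρ) (ENNReal.one_le_ofReal.2 hp)
    hg.aestronglyMeasurable
  rw [eLpNorm_one_eq_lintegral_enorm, eLpNorm_eq_lintegral_rpow_enorm_toReal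
    (by simpa using hp0) ENNReal.ofReal_ne_top, ENNReal.toReal_ofReal hp0.le] at h
  simp only [enorm_eq_self, ENNReal.toReal_one, div_one] at h
  calc (∫⁻ x, g x ∂ρ) ^ p
      ≤ ((∫⁻ x, g x ^ p ∂ρ) ^ (1 / p) * ρ univ ^ (1 - 1 / p)) ^ p := by gcongr
    _ = ρ univ ^ (p - 1) * ∫⁻ x, g x ^ p ∂ρ := by
      rw [ENNReal.mul_rpow_of_nonneg _ _ hp0.le, ← ENNReal.rpow_mul, ← ENNReal.rpow_mul,
        one_div_mul_cancel hp0.ne', ENNReal.rpow_one, mul_comm]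
      congr 2
      field_simp

variable {μ : Measure α} [SFinite μ] {K : α → α → ℝ≥0∞} {C : ℝ≥0∞}

theorem lintegral_rpow_lintegral_kernel_le (hK : Measurable (uncurry K))
    (hrow : ∀ᵐ x ∂μ, ∫⁻ y, K x y ∂μ ≤ C) (hcol : ∀ᵐ y ∂μ, ∫⁻ x, K x y ∂μ ≤ C)
    {g : α → ℝ≥0∞} (hg : Measurable g) {p : ℝ} (hp : 1 ≤ p) :
    ∫⁻ x, (∫⁻ y, K x y * g y ∂μ) ^ p ∂μ ≤ C ^ p * ∫⁻ y, g y ^ p ∂μ := by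
  have hgp : Measurable fun y => g y ^ p := hg.pow_const p
  have hpoint : ∀ᵐ x ∂μ,
      (∫⁻ y, K x y * g y ∂μ) ^ p ≤ C ^ (p - 1) * ∫⁻ y, K x y * g y ^ p ∂μ := by
    filter_upwards [hrow] with x hx
    have hKx : Measurable (K x) := hK.of_uncurry_left
    calc (∫⁻ y, K x y * g y ∂μ) ^ p
        = (∫⁻ y, g y ∂μ.withDensity (K x)) ^ p := by
          rw [lintegral_withDensity_eq_lintegral_mul _ hKx hg]; rfl
      _ ≤ (μ.withDensity (K x)) univ ^ (p - 1) * ∫⁻ y, g y ^ p ∂μ.withDensity (K x) :=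
          lintegral_rpow_le_measure_univ_rpow_mul _ hg.aemeasurable hp
      _ ≤ C ^ (p - 1) * ∫⁻ y, K x y * g y ^ p ∂μ := by
          rw [withDensity_apply _ MeasurableSet.univ, Measure.restrict_univ,
            lintegral_withDensity_eq_lintegral_mul _ hKx hgp]
          exact mul_le_mul' (ENNReal.rpow_le_rpow hx (by linarith)) le_rfl
  calc ∫⁻ x, (∫⁻ y, K x y * g y ∂μ) ^ p ∂μ
      ≤ ∫⁻ x, C ^ (p - 1) * ∫⁻ y, K x y * g y ^ p ∂μ ∂μ := lintegral_mono_ae hpoint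
    _ = C ^ (p - 1) * ∫⁻ y, g y ^ p * ∫⁻ x, K x y ∂μ ∂μ := by
      have hF : Measurable (uncurry fun x y => K x y * g y ^ p) :=
        hK.mul (hgp.comp measurable_snd)
      rw [lintegral_const_mul (f := fun x => ∫⁻ y, K x y * g y ^ p ∂μ) _
        hF.lintegral_prod_right', lintegral_lintegral_swap hF.aemeasurable]
      simp_rw [mul_comm (K _ _), lintegral_const_mul _ hK.of_uncurry_right]
    _ ≤ C ^ (p - 1) * ∫⁻ y, g y ^ p * C ∂μ := by
      gcongr 1
      exact lintegral_mono_ae (hcol.mono fun y hy => by gcongr)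
    _ = C ^ p * ∫⁻ y, g y ^ p ∂μ := by
      rw [lintegral_mul_const _ hgp, ← sub_add_cancel p 1,
        ENNReal.rpow_add_of_nonneg _ _ (by linarith) zero_le_one, ENNReal.rpow_one,
        add_sub_cancel_right]
      ring

theorem eLpNorm_lintegral_kernel_le (hK : Measurable (uncurry K))
    (hrow : ∀ᵐ x ∂μ, ∫⁻ y, K x y ∂μ ≤ C) (hcol : ∀ᵐ y ∂μ, ∫⁻ x, K x y ∂μ ≤ C)
    {g : α → ℝ≥0∞} (hg : Measurable g) {p : ℝ≥0∞} (hp : 1 ≤ p) :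
    eLpNorm (fun x => ∫⁻ y, K x y * g y ∂μ) p μ ≤ C * eLpNorm g p μ := by
  rcases eq_or_ne p ∞ with rfl | hp_top
  · have hg_le : ∀ᵐ y ∂μ, g y ≤ eLpNormEssSup g μ := ae_le_eLpNormEssSup
    have hbound : ∀ᵐ x ∂μ, ‖∫⁻ y, K x y * g y ∂μ‖ₑ ≤ C * eLpNormEssSup g μ := by
      filter_upwards [hrow] with x hx
      calc ∫⁻ y, K x y * g y ∂μ ≤ ∫⁻ y, K x y * eLpNormEssSup g μ ∂μ :=
            lintegral_mono_ae (hg_le.mono fun y hy => by gcongr)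
        _ ≤ C * eLpNormEssSup g μ := by
            rw [lintegral_mul_const _ hK.of_uncurry_left]; gcongr
    simpa using eLpNorm_le_of_ae_enorm_bound (p := ∞) hbound
  have hp0 : p ≠ 0 := (zero_lt_one.trans_le hp).ne'
  have hr : 1 ≤ p.toReal := by
    simpa using ENNReal.toReal_mono hp_top hp
  have hr0 : 0 < p.toReal := by linarith
  simp only [eLpNorm_eq_lintegral_rpow_enorm_toReal hp0 hp_top, enorm_eq_self]
  calc (∫⁻ x, (∫⁻ y, K x y * g y ∂μ) ^ p.toReal ∂μ) ^ (1 / p.toReal)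
      ≤ (C ^ p.toReal * ∫⁻ y, g y ^ p.toReal ∂μ) ^ (1 / p.toReal) := by
        gcongr
        exact lintegral_rpow_lintegral_kernel_le hK hrow hcol hg hr
    _ = C * (∫⁻ y, g y ^ p.toReal ∂μ) ^ (1 / p.toReal) := by
        rw [ENNReal.mul_rpow_of_nonneg _ _ (by positivity), ← ENNReal.rpow_mul,
          mul_one_div_cancel hr0.ne', ENNReal.rpow_one]

theorem eLpNorm_sqrt_lintegral_kernel_sq_le (hK : Measurable (uncurry K))
    (hrow : ∀ᵐ x ∂μ, ∫⁻ y, K x y ∂μ ≤ C) (hcol : ∀ᵐ y ∂μ, ∫⁻ x, K x y ∂μ ≤ C)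
    {g : α → ℝ≥0∞} (hg : Measurable g) {q : ℝ≥0∞} (hq : 2 ≤ q) :
    eLpNorm (fun x => (∫⁻ y, K x y * g y ^ (2 : ℝ) ∂μ) ^ (1 / 2 : ℝ)) q μ
      ≤ C ^ (1 / 2 : ℝ) * eLpNorm g q μ := by
  have hhalf : q * ENNReal.ofReal (1 / 2) * ENNReal.ofReal 2 = q := by
    rw [mul_assoc, ← ENNReal.ofReal_mul (by norm_num)]; norm_num
  have hp : 1 ≤ q * ENNReal.ofReal (1 / 2) :=
    calc 1 = 2 * ENNReal.ofReal (1 / 2) := by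
          rw [← ENNReal.ofReal_ofNat 2, ← ENNReal.ofReal_mul zero_le_two]; norm_num
      _ ≤ q * ENNReal.ofReal (1 / 2) := by gcongr
  have h := eLpNorm_enorm_rpow (μ := μ) (p := q) (fun x => ∫⁻ y, K x y * g y ^ (2 : ℝ) ∂μ)
    (q := 1 / 2) (by norm_num)
  have h2 := eLpNorm_enorm_rpow (μ := μ) (p := q * ENNReal.ofReal (1 / 2)) g (q := 2)
    (by norm_num)
  simp only [enorm_eq_self, hhalf] at h h2
  rw [h]
  calc eLpNorm (fun x => ∫⁻ y, K x y * g y ^ (2 : ℝ) ∂μ) (q * ENNReal.ofReal (1 / 2)) μ ^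
        (1 / 2 : ℝ)
      ≤ (C * eLpNorm (fun y => g y ^ (2 : ℝ)) (q * ENNReal.ofReal (1 / 2)) μ) ^
          (1 / 2 : ℝ) := by
        gcongr
        exact eLpNorm_lintegral_kernel_le hK hrow hcol (hg.pow_const _) hp
    _ = C ^ (1 / 2 : ℝ) * eLpNorm g q μ := by
        rw [h2, ENNReal.mul_rpow_of_nonneg _ _ (by norm_num), ← ENNReal.rpow_mul]
        norm_num

end Schur

theorem setLIntegral_Icc_sub_rpow {T r a b : ℝ} (hab : a ≤ b) (hbT : b ≤ T)
    (hr : -1 < r ∨ (r ≠ -1 ∧ b < T)) :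
    ∫⁻ x in Icc a b, ENNReal.ofReal ((T - x) ^ r)
      = ENNReal.ofReal (((T - a) ^ (r + 1) - (T - b) ^ (r + 1)) / (r + 1)) := by
  have hcond : -1 < r ∨ (r ≠ -1 ∧ 0 ∉ uIcc (T - b) (T - a)) := by
    refine hr.imp_right fun h => ⟨h.1, fun h0 => ?_⟩
    rw [uIcc_of_le (by linarith)] at h0
    linarith [h0.1, h.2]
  have hint : IntervalIntegrable (fun x => x ^ r) volume (T - b) (T - a) := by
    rcases hcond with h | h
    · exact intervalIntegral.intervalIntegrable_rpow' h
    · exact intervalIntegral.intervalIntegrable_rpow (Or.inr h.2)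
  have hint' : IntegrableOn (fun x => (T - x) ^ r) (Ioc a b) := by
    have := hint.symm.comp_sub_left T
    simp only [sub_sub_cancel] at this
    exact (intervalIntegrable_iff_integrableOn_Ioc_of_le hab).1 this
  rw [← setLIntegral_congr Ioc_ae_eq_Icc, ← ofReal_integral_eq_lintegral_ofReal hint'
    ((ae_restrict_iff' measurableSet_Ioc).2 (ae_of_all _ fun x hx =>
      Real.rpow_nonneg (by linarith [hx.2]) r)),
    ← intervalIntegral.integral_of_le hab,
    intervalIntegral.integral_comp_sub_left (fun x => x ^ r) T, integral_rpow hcond]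

noncomputable def phiMeasure (T : ℝ) : Measure ℝ :=
  (volume.restrict (Ico 0 T)).withDensity fun t => ENNReal.ofReal (1 / (T - t))

instance (T : ℝ) : SFinite (phiMeasure T) := by
  unfold phiMeasure; infer_instance

theorem lintegral_phiMeasure {T : ℝ} {F : ℝ → ℝ≥0∞} (hF : Measurable F) :
    ∫⁻ t, F t ∂phiMeasure T = ∫⁻ t in Ico 0 T, ENNReal.ofReal (1 / (T - t)) * F t :=
  lintegral_withDensity_eq_lintegral_mul _ (by fun_prop) hF

theorem ae_phiMeasure_mem (T : ℝ) : ∀ᵐ t ∂phiMeasure T, t ∈ Ico 0 T :=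
  (withDensity_absolutelyContinuous _ _).ae_le (ae_restrict_mem measurableSet_Ico)

noncomputable def powerKernel (T a t s : ℝ) : ℝ≥0∞ :=
  if t < s then ENNReal.ofReal (((T - s) / (T - t)) ^ a) else 0

theorem measurable_powerKernel (T a : ℝ) : Measurable (uncurry (powerKernel T a)) :=
  Measurable.ite (measurableSet_lt measurable_fst measurable_snd) (by fun_prop) measurable_const

theorem one_div_mul_div_rpow {x y : ℝ} (hx : 0 < x) (hy : 0 < y) (a : ℝ) :
    1 / x * (x / y) ^ a = y ^ (-a) * x ^ (a - 1) := by
  rw [Real.div_rpow hx.le hy.le, Real.rpow_neg hy.le, Real.rpow_sub_one hx.ne']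
  field_simp

theorem one_div_mul_div_rpow' {x y : ℝ} (hx : 0 < x) (hy : 0 < y) (a : ℝ) :
    1 / x * (y / x) ^ a = y ^ a * x ^ (-a - 1) := by
  rw [Real.div_rpow hy.le hx.le, Real.rpow_sub_one hx.ne', Real.rpow_neg hx.le]
  field_simp

theorem lintegral_powerKernel_right_le {T a t : ℝ} (ha : 0 < a) (ht : t < T) :
    ∫⁻ s, powerKernel T a t s ∂phiMeasure T ≤ ENNReal.ofReal a⁻¹ := by
  have hTt : 0 < T - t := sub_pos.2 ht
  rw [lintegral_phiMeasure (measurable_powerKernel T a).of_uncurry_left]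
  have hpoint : ∀ s ∈ Ico 0 T, ENNReal.ofReal (1 / (T - s)) * powerKernel T a t s
      ≤ (Icc t T).indicator
          (fun s => ENNReal.ofReal ((T - t) ^ (-a)) * ENNReal.ofReal ((T - s) ^ (a - 1))) s := by
    intro s hs
    have hTs : 0 < T - s := sub_pos.2 hs.2
    unfold powerKernel
    split_ifs with hts
    · rw [indicator_of_mem (show s ∈ Icc t T from ⟨hts.le, hs.2.le⟩),
        ← ENNReal.ofReal_mul (by positivity), ← ENNReal.ofReal_mul (by positivity),
        one_div_mul_div_rpow hTs hTt]
    · simp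
  calc ∫⁻ s in Ico 0 T, ENNReal.ofReal (1 / (T - s)) * powerKernel T a t s
      ≤ ∫⁻ s, (Icc t T).indicator
          (fun s => ENNReal.ofReal ((T - t) ^ (-a)) * ENNReal.ofReal ((T - s) ^ (a - 1))) s :=
        (setLIntegral_mono' measurableSet_Ico hpoint).trans (setLIntegral_le_lintegral _ _)
    _ = ENNReal.ofReal ((T - t) ^ (-a)) * ENNReal.ofReal ((T - t) ^ a / a) := by
        rw [lintegral_indicator measurableSet_Icc, lintegral_const_mul' _ _ ENNReal.ofReal_ne_top,
          setLIntegral_Icc_sub_rpow ht.le le_rfl (Or.inl (by linarith))]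
        simp [Real.zero_rpow ha.ne']
    _ = ENNReal.ofReal a⁻¹ := by
        rw [← ENNReal.ofReal_mul (by positivity), mul_div_assoc', ← Real.rpow_add hTt,
          neg_add_cancel, Real.rpow_zero, one_div]

theorem lintegral_powerKernel_left_le {T a s : ℝ} (ha : 0 < a) (hs : s ∈ Ico 0 T) :
    ∫⁻ t, powerKernel T a t s ∂phiMeasure T ≤ ENNReal.ofReal a⁻¹ := by
  have hTs : 0 < T - s := sub_pos.2 hs.2
  rw [lintegral_phiMeasure ((measurable_powerKernel T a).of_uncurry_right)]
  have hpoint : ∀ t ∈ Ico 0 T, ENNReal.ofReal (1 / (T - t)) * powerKernel T a t s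
      ≤ (Icc 0 s).indicator
          (fun t => ENNReal.ofReal ((T - s) ^ a) * ENNReal.ofReal ((T - t) ^ (-a - 1))) t := by
    intro t ht
    have hTt : 0 < T - t := sub_pos.2 ht.2
    unfold powerKernel
    split_ifs with hts
    · rw [indicator_of_mem (show t ∈ Icc 0 s from ⟨ht.1, hts.le⟩),
        ← ENNReal.ofReal_mul (by positivity), ← ENNReal.ofReal_mul (by positivity),
        one_div_mul_div_rpow' hTt hTs]
    · simp
  calc ∫⁻ t in Ico 0 T, ENNReal.ofReal (1 / (T - t)) * powerKernel T a t s
      ≤ ∫⁻ t, (Icc 0 s).indicator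
          (fun t => ENNReal.ofReal ((T - s) ^ a) * ENNReal.ofReal ((T - t) ^ (-a - 1))) t :=
        (setLIntegral_mono' measurableSet_Ico hpoint).trans (setLIntegral_le_lintegral _ _)
    _ = ENNReal.ofReal ((T - s) ^ a * ((T ^ (-a) - (T - s) ^ (-a)) / (-a))) := by
        rw [lintegral_indicator measurableSet_Icc, lintegral_const_mul' _ _ ENNReal.ofReal_ne_top,
          setLIntegral_Icc_sub_rpow hs.1 hs.2.le (Or.inr ⟨by linarith, hs.2⟩),
          ← ENNReal.ofReal_mul (by positivity)]
        ring_nf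
    _ ≤ ENNReal.ofReal a⁻¹ := by
        apply ENNReal.ofReal_le_ofReal
        have hprod : 0 ≤ (T - s) ^ a * T ^ (-a) := by
          have : 0 < T := by linarith [hs.1]
          positivity
        calc (T - s) ^ a * ((T ^ (-a) - (T - s) ^ (-a)) / (-a))
            = (1 - (T - s) ^ a * T ^ (-a)) / a := by
              have : (T - s) ^ a ≠ 0 := by positivity
              rw [Real.rpow_neg hTs.le]
              field_simp
              ring
          _ ≤ a⁻¹ := by rw [inv_eq_one_div]; gcongr; linarith

theorem enorm_rpow_mul_rpow_two {x : ℝ} (hx : 0 ≤ x) (b y : ℝ) :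
    ‖x ^ b * y‖ₑ ^ (2 : ℝ) = ENNReal.ofReal (x ^ (2 * b) * y ^ 2) := by
  rw [Real.enorm_eq_ofReal_abs, ENNReal.ofReal_rpow_of_nonneg (abs_nonneg _) zero_le_two,
    Real.rpow_two, sq_abs, mul_pow, mul_comm 2 b, Real.rpow_mul hx, Real.rpow_two]

theorem lintegral_powerKernel_mul_sq_eq_Ioc_right {T θ t : ℝ} {g : ℝ → ℝ} (hg : Measurable g)
    (ht : t ∈ Ico 0 T) :
    ∫⁻ s, powerKernel T θ t s * ‖(T - s) ^ ((1 - θ) / 2) * g s‖ₑ ^ (2 : ℝ) ∂phiMeasure T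
      = ENNReal.ofReal ((T - t) ^ (-θ)) * ∫⁻ s in Ioc t T, ENNReal.ofReal (g s ^ 2) := by
  have hTt : 0 < T - t := sub_pos.2 ht.2
  have hpoint : ∀ s ∈ Ico 0 T, ENNReal.ofReal (1 / (T - s)) *
      (powerKernel T θ t s * ‖(T - s) ^ ((1 - θ) / 2) * g s‖ₑ ^ (2 : ℝ))
      = (Ioo t T).indicator (fun s => ENNReal.ofReal ((T - t) ^ (-θ) * g s ^ 2)) s := by
    intro s hs
    have hTs : 0 < T - s := sub_pos.2 hs.2
    unfold powerKernel
    split_ifs with hts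
    · rw [indicator_of_mem (show s ∈ Ioo t T from ⟨hts, hs.2⟩),
        enorm_rpow_mul_rpow_two hTs.le, ← ENNReal.ofReal_mul (by positivity),
        ← ENNReal.ofReal_mul (by positivity), ← mul_assoc, one_div_mul_div_rpow hTs hTt,
        mul_assoc, ← mul_assoc ((T - s) ^ (θ - 1)), ← Real.rpow_add hTs]
      ring_nf
      simp
    · rw [indicator_of_notMem (fun h => hts h.1)]
      simp
  have hsub : Ioo t T ⊆ Ico 0 T := fun s hs => ⟨ht.1.trans hs.1.le, hs.2⟩
  rw [lintegral_phiMeasure ((measurable_powerKernel T θ).of_uncurry_left.fun_mul (by fun_prop)),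
    setLIntegral_congr_fun measurableSet_Ico hpoint, setLIntegral_indicator measurableSet_Ioo,
    inter_eq_left.2 hsub, setLIntegral_congr Ioo_ae_eq_Ioc,
    ← lintegral_const_mul' _ _ ENNReal.ofReal_ne_top]
  refine setLIntegral_congr_fun measurableSet_Ioc fun s _ => ?_
  rw [ENNReal.ofReal_mul (by positivity)]

theorem lintegral_powerKernel_mul_sq_eq_Ioc_left {T θ t : ℝ} {g : ℝ → ℝ} (hg : Measurable g)
    (ht : t ∈ Ico 0 T) :
    ∫⁻ u, powerKernel T (1 - θ) u t * ‖(T - u) ^ ((2 - θ) / 2) * g u‖ₑ ^ (2 : ℝ) ∂phiMeasure T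
      = ENNReal.ofReal ((T - t) ^ (1 - θ)) * ∫⁻ u in Ioc 0 t, ENNReal.ofReal (g u ^ 2) := by
  have hTt : 0 < T - t := sub_pos.2 ht.2
  have hpoint : ∀ u ∈ Ico 0 T, ENNReal.ofReal (1 / (T - u)) *
      (powerKernel T (1 - θ) u t * ‖(T - u) ^ ((2 - θ) / 2) * g u‖ₑ ^ (2 : ℝ))
      = (Iio t).indicator (fun u => ENNReal.ofReal ((T - t) ^ (1 - θ) * g u ^ 2)) u := by
    intro u hu
    have hTu : 0 < T - u := sub_pos.2 hu.2
    unfold powerKernel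
    split_ifs with hut
    · rw [indicator_of_mem (show u ∈ Iio t from hut),
        enorm_rpow_mul_rpow_two hTu.le, ← ENNReal.ofReal_mul (by positivity),
        ← ENNReal.ofReal_mul (by positivity), ← mul_assoc, one_div_mul_div_rpow' hTu hTt,
        mul_assoc, ← mul_assoc ((T - u) ^ _), ← Real.rpow_add hTu]
      ring_nf
      simp
    · rw [indicator_of_notMem (show u ∉ Iio t from hut)]
      simp
  rw [lintegral_phiMeasure
      ((measurable_powerKernel T (1 - θ)).of_uncurry_right.fun_mul (by fun_prop)),
    setLIntegral_congr_fun measurableSet_Ico hpoint, setLIntegral_indicator measurableSet_Iio,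
    inter_comm, Ico_inter_Iio, min_eq_right ht.2.le,
    setLIntegral_congr Ico_ae_eq_Ioc, ← lintegral_const_mul' _ _ ENNReal.ofReal_ne_top]
  refine setLIntegral_congr_fun measurableSet_Ioc fun u _ => ?_
  rw [ENNReal.ofReal_mul (by positivity)]

theorem phi_le_of_le_sqrt_lintegral_Ioc_right {T θ D : ℝ} {q : ℝ≥0∞} (hθ : 0 < θ)
    (hq : 2 ≤ q) {f g : ℝ → ℝ} (hg : Measurable g) (hf : ∀ t ∈ Ico 0 T, 0 ≤ f t)
    (h : ∀ t ∈ Ico 0 T, ENNReal.ofReal (f t) ≤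
      ENNReal.ofReal D * (∫⁻ s in Ioc t T, ENNReal.ofReal (g s ^ 2)) ^ (1 / 2 : ℝ)) :
    Phi T q (fun t => (T - t) ^ (-θ / 2) * f t)
      ≤ ENNReal.ofReal D * ENNReal.ofReal θ⁻¹ ^ (1 / 2 : ℝ) *
          Phi T q (fun t => (T - t) ^ ((1 - θ) / 2) * g t) := by
  set G : ℝ → ℝ≥0∞ := fun s => ‖(T - s) ^ ((1 - θ) / 2) * g s‖ₑ
  have hG : Measurable G := by fun_prop
  have hS : Measurable fun t =>
      (∫⁻ s, powerKernel T θ t s * G s ^ (2 : ℝ) ∂phiMeasure T) ^ (1 / 2 : ℝ) :=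
    (((measurable_powerKernel T θ).mul ((hG.pow_const _).comp measurable_snd)
      ).lintegral_prod_right').pow_const _
  have hpoint : ∀ᵐ t ∂phiMeasure T, ‖(T - t) ^ (-θ / 2) * f t‖ₑ ≤ ENNReal.ofReal D *
      ‖(∫⁻ s, powerKernel T θ t s * G s ^ (2 : ℝ) ∂phiMeasure T) ^ (1 / 2 : ℝ)‖ₑ := by
    filter_upwards [ae_phiMeasure_mem T] with t ht
    have hTt : 0 < T - t := sub_pos.2 ht.2
    rw [enorm_eq_self, lintegral_powerKernel_mul_sq_eq_Ioc_right hg ht,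
      ENNReal.mul_rpow_of_nonneg _ _ (by norm_num),
      ENNReal.ofReal_rpow_of_nonneg (by positivity) (by norm_num), ← Real.rpow_mul hTt.le,
      Real.enorm_eq_ofReal (mul_nonneg (by positivity) (hf t ht)),
      ENNReal.ofReal_mul (by positivity)]
    calc ENNReal.ofReal ((T - t) ^ (-θ / 2)) * ENNReal.ofReal (f t)
        ≤ ENNReal.ofReal ((T - t) ^ (-θ / 2)) *
            (ENNReal.ofReal D * (∫⁻ s in Ioc t T, ENNReal.ofReal (g s ^ 2)) ^ (1 / 2 : ℝ)) := by
          gcongr; exact h t ht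
      _ = _ := by ring_nf
  calc Phi T q (fun t => (T - t) ^ (-θ / 2) * f t)
      ≤ ENNReal.ofReal D * eLpNorm (fun t =>
          (∫⁻ s, powerKernel T θ t s * G s ^ (2 : ℝ) ∂phiMeasure T) ^ (1 / 2 : ℝ))
          q (phiMeasure T) :=
        eLpNorm_le_mul_eLpNorm_of_ae_le_mul'' q hS.aestronglyMeasurable hpoint
    _ ≤ ENNReal.ofReal D * (ENNReal.ofReal θ⁻¹ ^ (1 / 2 : ℝ) * eLpNorm G q (phiMeasure T)) := by
        gcongr
        refine eLpNorm_sqrt_lintegral_kernel_sq_le (measurable_powerKernel T θ) ?_ ?_ hG hq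
        · filter_upwards [ae_phiMeasure_mem T] with t ht
          exact lintegral_powerKernel_right_le hθ ht.2
        · filter_upwards [ae_phiMeasure_mem T] with s hs
          exact lintegral_powerKernel_left_le hθ hs
    _ = _ := by rw [eLpNorm_enorm, mul_assoc]; rfl

theorem eLpNorm_sub_rpow_phiMeasure_lt_top {T b : ℝ} (hT : 0 ≤ T) (hb : 0 < b) (q : ℝ≥0∞) :
    eLpNorm (fun t => (T - t) ^ b) q (phiMeasure T) < ∞ := by
  rcases eq_or_ne q 0 with rfl | hq0
  · simp
  rcases eq_or_ne q ∞ with rfl | hq_top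
  · have hbound : ∀ᵐ t ∂phiMeasure T, ‖(T - t) ^ b‖ₑ ≤ ENNReal.ofReal (T ^ b) := by
      filter_upwards [ae_phiMeasure_mem T] with t ht
      rw [Real.enorm_eq_ofReal (Real.rpow_nonneg (sub_nonneg.2 ht.2.le) b)]
      exact ENNReal.ofReal_le_ofReal
        (Real.rpow_le_rpow (sub_nonneg.2 ht.2.le) (by linarith [ht.1]) hb.le)
    exact (eLpNorm_le_of_ae_enorm_bound hbound).trans_lt (by simp)
  have hr : 0 < q.toReal := ENNReal.toReal_pos hq0 hq_top
  rw [eLpNorm_lt_top_iff_lintegral_rpow_enorm_lt_top hq0 hq_top, lintegral_phiMeasure (by fun_prop)]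
  have hpoint : ∀ t ∈ Ico 0 T, ENNReal.ofReal (1 / (T - t)) * ‖(T - t) ^ b‖ₑ ^ q.toReal
      = ENNReal.ofReal ((T - t) ^ (b * q.toReal - 1)) := by
    intro t ht
    have hTt : 0 < T - t := sub_pos.2 ht.2
    rw [Real.enorm_eq_ofReal (by positivity), ENNReal.ofReal_rpow_of_nonneg (by positivity) hr.le,
      ← ENNReal.ofReal_mul (by positivity), ← Real.rpow_mul hTt.le, Real.rpow_sub_one hTt.ne',
      one_div_mul_eq_div]
  calc ∫⁻ t in Ico 0 T, ENNReal.ofReal (1 / (T - t)) * ‖(T - t) ^ b‖ₑ ^ q.toReal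
      = ∫⁻ t in Ico 0 T, ENNReal.ofReal ((T - t) ^ (b * q.toReal - 1)) :=
        setLIntegral_congr_fun measurableSet_Ico hpoint
    _ ≤ ∫⁻ t in Icc 0 T, ENNReal.ofReal ((T - t) ^ (b * q.toReal - 1)) :=
        lintegral_mono_set Ico_subset_Icc_self
    _ < ∞ := by
        rw [setLIntegral_Icc_sub_rpow hT le_rfl (Or.inl (by nlinarith))]
        exact ENNReal.ofReal_lt_top

theorem phi_le_of_le_add_sqrt_lintegral_Ioc_left {T θ A D : ℝ} {q : ℝ≥0∞} (hT : 0 ≤ T)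
    (hθ : θ < 1) (hq : 2 ≤ q) {f g : ℝ → ℝ} (hg : Measurable g) (hf : ∀ t ∈ Ico 0 T, 0 ≤ f t)
    (h : ∀ t ∈ Ico 0 T, ENNReal.ofReal (f t) ≤ ENNReal.ofReal A +
      ENNReal.ofReal D * (∫⁻ u in Ioc 0 t, ENNReal.ofReal (g u ^ 2)) ^ (1 / 2 : ℝ)) :
    ∃ C : ℝ≥0∞, C ≠ ∞ ∧ Phi T q (fun t => (T - t) ^ ((1 - θ) / 2) * f t)
      ≤ C * (ENNReal.ofReal A + Phi T q (fun t => (T - t) ^ ((2 - θ) / 2) * g t)) := by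
  have hθ' : 0 < 1 - θ := by linarith
  set W := eLpNorm (fun t => (T - t) ^ ((1 - θ) / 2)) q (phiMeasure T)
  have hW : W < ∞ := eLpNorm_sub_rpow_phiMeasure_lt_top hT (by linarith) q
  set G : ℝ → ℝ≥0∞ := fun u => ‖(T - u) ^ ((2 - θ) / 2) * g u‖ₑ
  have hG : Measurable G := by fun_prop
  have hK : Measurable (uncurry fun t u => powerKernel T (1 - θ) u t) :=
    (measurable_powerKernel T (1 - θ)).comp measurable_swap
  have hS : Measurable fun t =>
      (∫⁻ u, powerKernel T (1 - θ) u t * G u ^ (2 : ℝ) ∂phiMeasure T) ^ (1 / 2 : ℝ) :=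
    ((hK.mul ((hG.pow_const _).comp measurable_snd)).lintegral_prod_right').pow_const _
  set c := ENNReal.ofReal D * ENNReal.ofReal (1 - θ)⁻¹ ^ (1 / 2 : ℝ)
  refine ⟨W + c, by finiteness, ?_⟩
  have hpoint : ∀ᵐ t ∂phiMeasure T, ‖(T - t) ^ ((1 - θ) / 2) * f t‖ₑ ≤
      ‖ENNReal.ofReal A * ENNReal.ofReal ((T - t) ^ ((1 - θ) / 2)) + ENNReal.ofReal D *
        (∫⁻ u, powerKernel T (1 - θ) u t * G u ^ (2 : ℝ) ∂phiMeasure T) ^ (1 / 2 : ℝ)‖ₑ := by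
    filter_upwards [ae_phiMeasure_mem T] with t ht
    have hTt : 0 < T - t := sub_pos.2 ht.2
    rw [enorm_eq_self, lintegral_powerKernel_mul_sq_eq_Ioc_left hg ht,
      ENNReal.mul_rpow_of_nonneg _ _ (by norm_num),
      ENNReal.ofReal_rpow_of_nonneg (by positivity) (by norm_num), ← Real.rpow_mul hTt.le,
      Real.enorm_eq_ofReal (mul_nonneg (by positivity) (hf t ht)),
      ENNReal.ofReal_mul (by positivity)]
    calc ENNReal.ofReal ((T - t) ^ ((1 - θ) / 2)) * ENNReal.ofReal (f t)
        ≤ ENNReal.ofReal ((T - t) ^ ((1 - θ) / 2)) * (ENNReal.ofReal A +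
            ENNReal.ofReal D * (∫⁻ u in Ioc 0 t, ENNReal.ofReal (g u ^ 2)) ^ (1 / 2 : ℝ)) := by
          gcongr; exact h t ht
      _ = _ := by ring_nf
  have hAw : Measurable fun t => ENNReal.ofReal A * ENNReal.ofReal ((T - t) ^ ((1 - θ) / 2)) := by
    fun_prop
  calc Phi T q (fun t => (T - t) ^ ((1 - θ) / 2) * f t)
      ≤ eLpNorm (fun t => ENNReal.ofReal A * ENNReal.ofReal ((T - t) ^ ((1 - θ) / 2)) +
          ENNReal.ofReal D * (∫⁻ u, powerKernel T (1 - θ) u t * G u ^ (2 : ℝ) ∂phiMeasure T) ^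
            (1 / 2 : ℝ)) q (phiMeasure T) := eLpNorm_mono_enorm_ae hpoint
    _ ≤ ENNReal.ofReal A * W + ENNReal.ofReal D * (ENNReal.ofReal (1 - θ)⁻¹ ^ (1 / 2 : ℝ) *
          eLpNorm G q (phiMeasure T)) := by
        refine (eLpNorm_add_le hAw.aestronglyMeasurable
          (hS.const_mul _).aestronglyMeasurable (one_le_two.trans hq)).trans ?_
        gcongr
        · refine eLpNorm_le_mul_eLpNorm_of_ae_le_mul'' q
            (by fun_prop (disch := positivity)) (ae_of_all _ fun t => ?_)
          rw [enorm_eq_self]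
          gcongr
          exact Real.ofReal_le_enorm _
        · refine (eLpNorm_le_mul_eLpNorm_of_ae_le_mul'' q hS.aestronglyMeasurable
            (ae_of_all _ fun t => (enorm_eq_self _).le)).trans ?_
          gcongr
          refine eLpNorm_sqrt_lintegral_kernel_sq_le
            (K := fun t u => powerKernel T (1 - θ) u t) hK ?_ ?_ hG hq
          · filter_upwards [ae_phiMeasure_mem T] with t ht
            exact lintegral_powerKernel_left_le hθ' ht
          · filter_upwards [ae_phiMeasure_mem T] with u hu
            exact lintegral_powerKernel_right_le hθ' hu.2
    _ = W * ENNReal.ofReal A + c * Phi T q (fun t => (T - t) ^ ((2 - θ) / 2) * g t) := by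
        rw [mul_comm, ← mul_assoc, eLpNorm_enorm]; rfl
    _ ≤ (W + c) * (ENNReal.ofReal A + Phi T q (fun t => (T - t) ^ ((2 - θ) / 2) * g t)) := by
        rw [add_mul]
        gcongr
        · exact le_self_add
        · exact le_add_self

theorem phi_le_of_rpow_mul_le {T θ D k : ℝ} (q : ℝ≥0∞) (hD : 0 < D) {f g : ℝ → ℝ}
    (hf : ∀ t ∈ Ico 0 T, 0 ≤ f t) (h : ∀ t ∈ Ico 0 T, 1 / D * (T - t) ^ (k / 2) * f t ≤ g t) :
    Phi T q (fun t => (T - t) ^ ((k - θ) / 2) * f t)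
      ≤ ENNReal.ofReal D * Phi T q (fun t => (T - t) ^ (-θ / 2) * g t) := by
  refine eLpNorm_le_mul_eLpNorm_of_ae_le_mul ((ae_phiMeasure_mem T).mono fun t ht => ?_) q
  have hTt : 0 < T - t := sub_pos.2 ht.2
  have hfg : (T - t) ^ (k / 2) * f t ≤ D * g t := by
    have := h t ht
    rw [mul_assoc, one_div_mul_eq_div, div_le_iff₀ hD] at this
    linarith
  have hf0 := hf t ht
  have hg : 0 ≤ g t := (by positivity : 0 ≤ 1 / D * (T - t) ^ (k / 2) * f t).trans (h t ht)
  rw [Real.norm_of_nonneg (by positivity), Real.norm_of_nonneg (by positivity)]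
  calc (T - t) ^ ((k - θ) / 2) * f t = (T - t) ^ (-θ / 2) * ((T - t) ^ (k / 2) * f t) := by
        rw [← mul_assoc, ← Real.rpow_add hTt]; ring_nf
    _ ≤ (T - t) ^ (-θ / 2) * (D * g t) := by gcongr
    _ = D * ((T - t) ^ (-θ / 2) * g t) := by ring

theorem exists_add_le_mul_add_of_chain {y a b c : ℝ≥0∞} {x : Fin 3 → ℝ≥0∞} (ha : a ≠ ∞)
    (hb : b ≠ ∞) (hc : c ≠ ∞) (h10 : x 1 ≤ a * x 0) (h20 : x 2 ≤ a * x 0) (h01 : x 0 ≤ b * x 1)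
    (h12 : x 1 ≤ c * (y + x 2)) :
    ∃ C : ℝ, 0 < C ∧ ∀ k l, y + x k ≤ ENNReal.ofReal C * (y + x l) := by
  set M := 1 + a + b + c
  have hM1 : 1 ≤ M := le_add_right (le_add_right le_self_add)
  have haM : a ≤ M := le_add_right (le_add_right le_add_self)
  have hbM : b ≤ M := le_add_right le_add_self
  have hcM : c ≤ M := le_add_self
  have hM : M ≠ ∞ := by finiteness
  clear_value M
  have hx0 : ∀ k, x k ≤ M * x 0 := by
    intro k
    fin_cases k
    · exact le_mul_of_one_le_left' hM1
    · exact h10.trans (by gcongr)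
    · exact h20.trans (by gcongr)
  have h0x : ∀ l, x 0 ≤ M ^ 2 * (y + x l) := by
    intro l
    fin_cases l
    · exact le_add_self.trans (le_mul_of_one_le_left' (one_le_pow₀ hM1))
    · exact h01.trans (mul_le_mul' (hbM.trans (le_self_pow₀ hM1 two_ne_zero)) le_add_self)
    · calc x 0 ≤ b * (c * (y + x 2)) := h01.trans (by gcongr)
        _ ≤ M ^ 2 * (y + x 2) := by rw [sq, mul_assoc]; gcongr
  refine ⟨(1 + M ^ 3).toReal, ENNReal.toReal_pos (by positivity) (by finiteness), fun k l => ?_⟩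
  rw [ENNReal.ofReal_toReal (by finiteness)]
  calc y + x k ≤ y + M * (M ^ 2 * (y + x l)) := by
        gcongr; exact (hx0 k).trans (by gcongr; exact h0x l)
    _ ≤ (1 + M ^ 3) * (y + x l) := by
      rw [add_mul, one_mul, ← mul_assoc, ← pow_succ']
      gcongr
      exact le_self_add

theorem interpolation_lemma_general
    (T : ℝ) (hT : 0 < T) (θ : ℝ) (hθ0 : 0 < θ) (hθ1 : θ < 1)
    (q : ℝ≥0∞) (hq : 2 ≤ q)
    (d : Fin 3 → ℝ → ℝ) (hdmeas : ∀ k, Measurable (d k))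
    (hdnn : ∀ k, ∀ t ∈ Set.Ico (0 : ℝ) T, 0 ≤ d k t)
    (A D : ℝ) (hD : 1 ≤ D)
    (hlow : ∀ k : Fin 3, k ≠ 0 → ∀ t ∈ Set.Ico (0 : ℝ) T,
      (1 / D) * (T - t) ^ (((k : ℕ) : ℝ) / 2) * d k t ≤ d 0 t)
    (hup : ∀ t ∈ Set.Ico (0 : ℝ) T,
      ENNReal.ofReal (d 0 t) ≤
        ENNReal.ofReal D * (∫⁻ s in Set.Ioc t T, ENNReal.ofReal ((d 1 s) ^ 2)) ^ ((1 : ℝ) / 2))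
    (hgrad : ∀ t ∈ Set.Ico (0 : ℝ) T,
      ENNReal.ofReal (d 1 t) ≤
        ENNReal.ofReal A +
          ENNReal.ofReal D *
            (∫⁻ u in Set.Ioc (0 : ℝ) t, ENNReal.ofReal ((d 2 u) ^ 2)) ^ ((1 : ℝ) / 2)) :
    ∃ c : ℝ, 0 < c ∧ ∀ k l : Fin 3,
      ENNReal.ofReal A +
          Phi T q (fun t => (T - t) ^ ((((k : ℕ) : ℝ) - θ) / 2) * d k t) ≤
        ENNReal.ofReal c *
          (ENNReal.ofReal A +
            Phi T q (fun t => (T - t) ^ ((((l : ℕ) : ℝ) - θ) / 2) * d l t)) := by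
  have hD0 : 0 < D := by linarith
  set Ψ : Fin 3 → ℝ≥0∞ := fun k => Phi T q (fun t => (T - t) ^ ((((k : ℕ) : ℝ) - θ) / 2) * d k t)
  have hΨ0 : Ψ 0 = Phi T q (fun t => (T - t) ^ (-θ / 2) * d 0 t) := by simp [Ψ]
  have hΨ1 : Ψ 1 = Phi T q (fun t => (T - t) ^ ((1 - θ) / 2) * d 1 t) := by simp [Ψ]
  have hΨ2 : Ψ 2 = Phi T q (fun t => (T - t) ^ ((2 - θ) / 2) * d 2 t) := by simp [Ψ]
  have h10 : Ψ 1 ≤ ENNReal.ofReal D * Ψ 0 :=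
    hΨ0 ▸ phi_le_of_rpow_mul_le q hD0 (hdnn 1) (hlow 1 (by decide))
  have h20 : Ψ 2 ≤ ENNReal.ofReal D * Ψ 0 :=
    hΨ0 ▸ phi_le_of_rpow_mul_le q hD0 (hdnn 2) (hlow 2 (by decide))
  have h01 : Ψ 0 ≤ ENNReal.ofReal D * ENNReal.ofReal θ⁻¹ ^ (1 / 2 : ℝ) * Ψ 1 :=
    hΨ0 ▸ hΨ1 ▸ phi_le_of_le_sqrt_lintegral_Ioc_right hθ0 hq (hdmeas 1) (hdnn 0) hup
  obtain ⟨C, hC, h12⟩ : ∃ C ≠ ∞, Ψ 1 ≤ C * (ENNReal.ofReal A + Ψ 2) :=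
    hΨ1 ▸ hΨ2 ▸ phi_le_of_le_add_sqrt_lintegral_Ioc_left hT.le hθ1 hq (hdmeas 2) (hdnn 1) hgrad
  exact exists_add_le_mul_add_of_chain (by finiteness) (by finiteness) hC h10 h20 h01 h12

/-- The deterministic interpolation lemma (Proposition A.4 of Geiss–Toivola):
the weighted `Φ_q`-norms of `d^0, d^1, d^2` with the appropriate power weights are
all equivalent up to a multiplicative constant, after adding the constant `A`. -/
theorem interpolation_lemma
    (T : ℝ) (hT : 0 < T) (θ : ℝ) (hθ0 : 0 < θ) (hθ1 : θ < 1)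
    (q : ℝ≥0∞) (hq : 2 ≤ q)
    (d : Fin 3 → ℝ → ℝ) (hdmeas : ∀ k, Measurable (d k))
    (hdnn : ∀ k, ∀ t ∈ Set.Ico (0 : ℝ) T, 0 ≤ d k t)
    (A D : ℝ) (hA : 0 ≤ A) (hD : 1 ≤ D)
    (hlow : ∀ k : Fin 3, k ≠ 0 → ∀ t ∈ Set.Ico (0 : ℝ) T,
      (1 / D) * (T - t) ^ (((k : ℕ) : ℝ) / 2) * d k t ≤ d 0 t)
    (hup : ∀ t ∈ Set.Ico (0 : ℝ) T,
      ENNReal.ofReal (d 0 t) ≤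
        ENNReal.ofReal D * (∫⁻ s in Set.Ioc t T, ENNReal.ofReal ((d 1 s) ^ 2)) ^ ((1 : ℝ) / 2))
    (hgrad : ∀ t ∈ Set.Ico (0 : ℝ) T,
      ENNReal.ofReal (d 1 t) ≤
        ENNReal.ofReal A +
          ENNReal.ofReal D *
            (∫⁻ u in Set.Ioc (0 : ℝ) t, ENNReal.ofReal ((d 2 u) ^ 2)) ^ ((1 : ℝ) / 2)) :
    ∃ c : ℝ, 0 < c ∧ ∀ k l : Fin 3,
      ENNReal.ofReal A +
          Phi T q (fun t => (T - t) ^ ((((k : ℕ) : ℝ) - θ) / 2) * d k t) ≤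
        ENNReal.ofReal c *
          (ENNReal.ofReal A +
            Phi T q (fun t => (T - t) ^ ((((l : ℕ) : ℝ) - θ) / 2) * d l t)) :=
  interpolation_lemma_general T hT θ hθ0 hθ1 q hq d hdmeas hdnn A D hD hlow hup hgrad
end
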